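/- Let C = {(x:y:z) ∈ ℙ²(ℂ) : x·y·z + y³ = 0} be the union of a smooth conic and a transverse line, and let p₁, …, pₙ ∈ C. If the stabilizer subgroup {g ∈ SL(3,ℂ) : g·C = C and g·pᵢ = pᵢ for all i} is infinite, then each pᵢ is one of the two nodal singularities (1:0:0) or (0:0:1). -/

import Mathlib

open Matrix

noncomputable section

/-- The special linear group `SL(3, ℂ)`. -/
abbrev SL3 := Matrix.SpecialLinearGroup (Fin 3) ℂ

/-- The complex projective plane `ℙ²(ℂ)`. -/
abbrev P2 := Projectivization ℂ (Fin 3 → ℂ)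

/-- The action of `SL(3, ℂ)` on `ℙ²(ℂ)` induced by the linear action on `ℂ³`. -/
noncomputable def act (g : SL3) (p : P2) : P2 :=
  Projectivization.map (Matrix.SpecialLinearGroup.toLin' g).toLinearMap
    (Matrix.SpecialLinearGroup.toLin' g).injective p

/-- The union of a smooth conic and a transverse line, `{x·y·z + y³ = 0}`. -/
def Cct : Set P2 := {p : P2 | p.rep 0 * p.rep 1 * p.rep 2 + p.rep 1 ^ 3 = 0}

/-- The nodal point `(1:0:0)`. -/
def node₁ : P2 := Projectivization.mk ℂ ![1, 0, 0] (by
  intro h; simpa using congrFun h 0)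

/-- The nodal point `(0:0:1)`. -/
def node₂ : P2 := Projectivization.mk ℂ ![0, 0, 1] (by
  intro h; simpa using congrFun h 2)

/-! An element of `SL(3)` preserving `C = {y = 0} ∪ {xz + y² = 0}` maps the line into `C`; since a
nondegenerate conic contains no line, the line is preserved, and then so is the conic. Comparing
coefficients shows that the matrix is diagonal `diag(a, b, c)` or antidiagonal with `ac = b²` and
`b³ = ±1`. A point of `C` other than the two nodes has `x ≠ 0` and `z ≠ 0`; fixing it pins every
entry down to a root of `X⁶ - r` for one of four values `r`, so the stabilizer is finite. -/

open Polynomial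

section Classification

variable {K : Type*} [Field K]

def conicForm (v : Fin 3 → K) : K := v 0 * v 2 + v 1 ^ 2

def conicLineForm (v : Fin 3 → K) : K := v 1 * conicForm v

lemma forall_eval_eq_zero_or_of_mul [Infinite K] {p q : K[X]}
    (h : ∀ x, p.eval x * q.eval x = 0) : (∀ x, p.eval x = 0) ∨ ∀ x, q.eval x = 0 := by
  have hpq : p * q = 0 := zero_of_eval_zero _ fun x => by simpa using h x
  rcases mul_eq_zero.mp hpq with rfl | rfl <;> simp

lemma coeffs_eq_zero_of_quartic [Infinite K] {e₀ e₁ e₂ e₃ e₄ : K}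
    (h : ∀ t, e₀ + e₁ * t + e₂ * t ^ 2 + e₃ * t ^ 3 + e₄ * t ^ 4 = 0) :
    e₀ = 0 ∧ e₁ = 0 ∧ e₂ = 0 ∧ e₃ = 0 ∧ e₄ = 0 := by
  have hp : (C e₀ + C e₁ * X + C e₂ * X ^ 2 + C e₃ * X ^ 3 + C e₄ * X ^ 4 : K[X]) = 0 :=
    zero_of_eval_zero _ fun t => by simpa using h t
  have hcoeff := fun n => congrArg (coeff · n) hp
  simp only [coeff_add, coeff_C_mul, coeff_X_pow, coeff_X, coeff_C, coeff_zero] at hcoeff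
  exact ⟨by simpa using hcoeff 0, by simpa using hcoeff 1, by simpa using hcoeff 2,
    by simpa using hcoeff 3, by simpa using hcoeff 4⟩

lemma mulVec_line (M : Matrix (Fin 3) (Fin 3) K) (z : K) :
    M *ᵥ ![1, 0, z] = fun i => M i 0 + M i 2 * z := by
  ext i; simp [mulVec, dotProduct, Fin.sum_univ_three]

lemma mulVec_conic (M : Matrix (Fin 3) (Fin 3) K) (t : K) :
    M *ᵥ ![1, t, -t ^ 2] = fun i => M i 0 + M i 1 * t - M i 2 * t ^ 2 := by
  ext i; simp [mulVec, dotProduct, Fin.sum_univ_three]; ring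

lemma det_eq_zero_of_conicForm_mulVec_line [Infinite K] {M : Matrix (Fin 3) (Fin 3) K}
    (h : ∀ z, conicForm (M *ᵥ ![1, 0, z]) = 0) : M.det = 0 := by
  obtain ⟨h₀, h₁, h₂, -, -⟩ := coeffs_eq_zero_of_quartic (e₀ := M 0 0 * M 2 0 + M 1 0 ^ 2)
    (e₁ := M 0 0 * M 2 2 + M 0 2 * M 2 0 + 2 * M 1 0 * M 1 2) (e₂ := M 0 2 * M 2 2 + M 1 2 ^ 2)
    (e₃ := 0) (e₄ := 0) fun z => by
    have hz := h z
    simp only [conicForm, mulVec_line] at hz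
    linear_combination hz
  -- `xz + y²` has no totally isotropic plane, so the columns `0` and `2` are parallel.
  have minor₀ : M 1 0 * M 2 2 - M 2 0 * M 1 2 = 0 := by
    rw [← sq_eq_zero_iff]
    linear_combination M 2 2 ^ 2 * h₀ - M 2 0 * M 2 2 * h₁ + M 2 0 ^ 2 * h₂
  have minor₁ : M 0 0 * M 2 2 - M 2 0 * M 0 2 = 0 := by
    rw [← sq_eq_zero_iff]
    linear_combination (M 0 0 * M 2 2 + M 2 0 * M 0 2 - 2 * M 1 0 * M 1 2) * h₁
      - 4 * M 0 2 * M 2 2 * h₀ + 4 * M 1 0 ^ 2 * h₂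
  have minor₂ : M 0 0 * M 1 2 - M 1 0 * M 0 2 = 0 := by
    rw [← sq_eq_zero_iff]
    linear_combination M 0 2 ^ 2 * h₀ - M 0 0 * M 0 2 * h₁ + M 0 0 ^ 2 * h₂
  rw [det_fin_three]
  linear_combination M 1 1 * minor₁ - M 0 1 * minor₀ - M 2 1 * minor₂

lemma row_one_eq_zero_of_mapsTo_line [Infinite K] {M : Matrix (Fin 3) (Fin 3) K} (hdet : M.det ≠ 0)
    (h : ∀ z, conicLineForm (M *ᵥ ![1, 0, z]) = 0) : M 1 0 = 0 ∧ M 1 2 = 0 := by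
  have hsplit := forall_eval_eq_zero_or_of_mul (p := C (M 1 0) + C (M 1 2) * X)
    (q := (C (M 0 0) + C (M 0 2) * X) * (C (M 2 0) + C (M 2 2) * X) +
      (C (M 1 0) + C (M 1 2) * X) ^ 2)
    fun z => by simpa [mulVec_line, conicLineForm, conicForm] using h z
  rcases hsplit with hrow | hconic
  · have h₀ := hrow 0
    have h₁ := hrow 1
    simp only [eval_add, eval_mul, eval_C, eval_X] at h₀ h₁
    exact ⟨by simpa using h₀, by linear_combination h₁ - h₀⟩
  · exact absurd (det_eq_zero_of_conicForm_mulVec_line fun z => by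
      simpa [mulVec_line, conicForm] using hconic z) hdet

lemma conicForm_mulVec_conic_eq_zero [Infinite K] {M : Matrix (Fin 3) (Fin 3) K} (h₁₀ : M 1 0 = 0)
    (h₁₁ : M 1 1 ≠ 0) (h₁₂ : M 1 2 = 0)
    (h : ∀ t, conicLineForm (M *ᵥ ![1, t, -t ^ 2]) = 0) (t : K) :
    conicForm (M *ᵥ ![1, t, -t ^ 2]) = 0 := by
  have hsplit := forall_eval_eq_zero_or_of_mul (p := C (M 1 1) * X)
    (q := (C (M 0 0) + C (M 0 1) * X - C (M 0 2) * X ^ 2) *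
      (C (M 2 0) + C (M 2 1) * X - C (M 2 2) * X ^ 2) + (C (M 1 1) * X) ^ 2)
    fun z => by simpa [mulVec_conic, conicLineForm, conicForm, h₁₀, h₁₂] using h z
  rcases hsplit with hrow | hconic
  · exact absurd (by simpa using hrow 1) h₁₁
  · simpa [mulVec_conic, conicForm, h₁₀, h₁₂] using hconic t

lemma eq_diagonal_or_antidiagonal_of_conicForm [Infinite K] {M : Matrix (Fin 3) (Fin 3) K}
    (hdet : M.det = 1) (h₁₀ : M 1 0 = 0) (h₁₂ : M 1 2 = 0)
    (h : ∀ t, conicForm (M *ᵥ ![1, t, -t ^ 2]) = 0) :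
    (∃ a b c, M = !![a, 0, 0; 0, b, 0; 0, 0, c] ∧ a * c = b ^ 2 ∧ b ^ 3 = 1) ∨
      ∃ a b c, M = !![0, 0, a; 0, b, 0; c, 0, 0] ∧ a * c = b ^ 2 ∧ b ^ 3 = -1 := by
  have hdet' : M 1 1 * (M 0 0 * M 2 2 - M 0 2 * M 2 0) = 1 := by
    rw [det_fin_three, h₁₀, h₁₂] at hdet
    linear_combination hdet
  obtain ⟨e₀, e₁, e₂, e₃, e₄⟩ := coeffs_eq_zero_of_quartic (e₀ := M 0 0 * M 2 0)
    (e₁ := M 0 0 * M 2 1 + M 0 1 * M 2 0)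
    (e₂ := M 0 1 * M 2 1 - M 0 0 * M 2 2 - M 0 2 * M 2 0 + M 1 1 ^ 2)
    (e₃ := -(M 0 1 * M 2 2 + M 0 2 * M 2 1)) (e₄ := M 0 2 * M 2 2) fun t => by
    have ht := h t
    simp only [conicForm, mulVec_conic, h₁₀, h₁₂] at ht
    linear_combination ht
  rcases mul_eq_zero.mp e₀ with h₀₀ | h₂₀
  · have hunit : M 0 2 * M 2 0 * -M 1 1 = 1 := by linear_combination hdet' - M 1 1 * M 2 2 * h₀₀
    obtain ⟨h₀₂, h₂₀⟩ := mul_ne_zero_iff.mp (left_ne_zero_of_mul_eq_one hunit)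
    have h₂₂ : M 2 2 = 0 := (mul_eq_zero_iff_left h₀₂).mp e₄
    have h₀₁ : M 0 1 = 0 := (mul_eq_zero_iff_right h₂₀).mp <| by
      linear_combination e₁ - M 2 1 * h₀₀
    have h₂₁ : M 2 1 = 0 := (mul_eq_zero_iff_left h₀₂).mp <| by
      linear_combination -e₃ - M 0 1 * h₂₂
    have hrel : M 0 2 * M 2 0 = M 1 1 ^ 2 := by
      linear_combination -e₂ + M 2 1 * h₀₁ - M 2 2 * h₀₀
    refine Or.inr ⟨M 0 2, M 1 1, M 2 0, ?_, hrel, by linear_combination -hunit - M 1 1 * hrel⟩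
    ext i j
    fin_cases i <;> fin_cases j <;> simp [*]
  · have hunit : M 0 0 * M 2 2 * M 1 1 = 1 := by linear_combination hdet' + M 1 1 * M 0 2 * h₂₀
    obtain ⟨h₀₀, h₂₂⟩ := mul_ne_zero_iff.mp (left_ne_zero_of_mul_eq_one hunit)
    have h₀₂ : M 0 2 = 0 := (mul_eq_zero_iff_right h₂₂).mp e₄
    have h₂₁ : M 2 1 = 0 := (mul_eq_zero_iff_left h₀₀).mp <| by
      linear_combination e₁ - M 0 1 * h₂₀
    have h₀₁ : M 0 1 = 0 := (mul_eq_zero_iff_right h₂₂).mp <| by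
      linear_combination -e₃ - M 0 2 * h₂₁
    have hrel : M 0 0 * M 2 2 = M 1 1 ^ 2 := by
      linear_combination -e₂ + M 2 1 * h₀₁ - M 0 2 * h₂₀
    refine Or.inl ⟨M 0 0, M 1 1, M 2 2, ?_, hrel, by linear_combination hunit - M 1 1 * hrel⟩
    ext i j
    fin_cases i <;> fin_cases j <;> simp [*]

theorem eq_diagonal_or_antidiagonal_of_preserves [Infinite K] {M : Matrix (Fin 3) (Fin 3) K}
    (hdet : M.det = 1) (hM : ∀ v, conicLineForm v = 0 → conicLineForm (M *ᵥ v) = 0) :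
    (∃ a b c, M = !![a, 0, 0; 0, b, 0; 0, 0, c] ∧ a * c = b ^ 2 ∧ b ^ 3 = 1) ∨
      ∃ a b c, M = !![0, 0, a; 0, b, 0; c, 0, 0] ∧ a * c = b ^ 2 ∧ b ^ 3 = -1 := by
  obtain ⟨h₁₀, h₁₂⟩ := row_one_eq_zero_of_mapsTo_line (hdet ▸ one_ne_zero)
    fun z => hM _ (by simp [conicLineForm])
  have h₁₁ : M 1 1 ≠ 0 := fun h₁₁ => by
    rw [det_fin_three, h₁₀, h₁₁, h₁₂] at hdet
    simp at hdet
  exact eq_diagonal_or_antidiagonal_of_conicForm hdet h₁₀ h₁₂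
    (conicForm_mulVec_conic_eq_zero h₁₀ h₁₁ h₁₂ fun t => hM _ (by simp [conicLineForm, conicForm]))

lemma entry_pow_six_mem [Infinite K] {M : Matrix (Fin 3) (Fin 3) K} (hdet : M.det = 1)
    (hM : ∀ v, conicLineForm v = 0 → conicLineForm (M *ᵥ v) = 0)
    {v : Fin 3 → K} (hv₀ : v 0 ≠ 0) (hv₂ : v 2 ≠ 0) {s : K} (hfix : M *ᵥ v = s • v) (i j : Fin 3) :
    M i j ^ 6 ∈ ({0, 1, (v 0 / v 2) ^ 6, (v 2 / v 0) ^ 6} : Set K) := by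
  rcases eq_diagonal_or_antidiagonal_of_preserves hdet hM with
    ⟨a, b, c, rfl, hac, hb⟩ | ⟨a, b, c, rfl, hac, hb⟩
  · have ha : a = s := mul_right_cancel₀ hv₀ <| by
      simpa [mulVec, dotProduct, Fin.sum_univ_three] using congrFun hfix 0
    have hc : c = s := mul_right_cancel₀ hv₂ <| by
      simpa [mulVec, dotProduct, Fin.sum_univ_three] using congrFun hfix 2
    rw [ha, hc] at hac
    have hs₆ : s ^ 6 = 1 := by
      linear_combination (s ^ 4 + s ^ 2 * b ^ 2 + b ^ 4) * hac + (b ^ 3 + 1) * hb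
    have hb₆ : b ^ 6 = 1 := by linear_combination (b ^ 3 + 1) * hb
    fin_cases i <;> fin_cases j <;> simp [ha, hc, hs₆, hb₆]
  · have h₀ : a * v 2 = s * v 0 := by
      simpa [mulVec, dotProduct, Fin.sum_univ_three] using congrFun hfix 0
    have h₂ : c * v 0 = s * v 2 := by
      simpa [mulVec, dotProduct, Fin.sum_univ_three] using congrFun hfix 2
    have hs₂ : s ^ 2 = b ^ 2 := mul_right_cancel₀ (mul_ne_zero hv₀ hv₂) <| by
      linear_combination -(a * v 2) * h₂ - s * v 2 * h₀ + v 0 * v 2 * hac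
    have hs₆ : s ^ 6 = 1 := by
      linear_combination (s ^ 4 + s ^ 2 * b ^ 2 + b ^ 4) * hs₂ + (b ^ 3 - 1) * hb
    have ha₆ : a ^ 6 = (v 0 / v 2) ^ 6 := by
      rw [div_pow, eq_div_iff (pow_ne_zero 6 hv₂), ← mul_pow, h₀, mul_pow, hs₆, one_mul]
    have hc₆ : c ^ 6 = (v 2 / v 0) ^ 6 := by
      rw [div_pow, eq_div_iff (pow_ne_zero 6 hv₀), ← mul_pow, h₂, mul_pow, hs₆, one_mul]
    have hb₆ : b ^ 6 = 1 := by linear_combination (b ^ 3 - 1) * hb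
    fin_cases i <;> fin_cases j <;> simp [ha₆, hb₆, hc₆]

end Classification

lemma finite_setOf_pow_mem {R : Type*} [CommRing R] [IsDomain R] {k : ℕ} (hk : k ≠ 0) {S : Set R}
    (hS : S.Finite) : {x : R | x ^ k ∈ S}.Finite :=
  hS.preimage' fun b _ => (nthRoots k b).finite_toSet.subset fun x hx => by
    simpa [mem_nthRoots (Nat.pos_of_ne_zero hk)] using hx

lemma finite_setOf_matrix_pow_mem {m n R : Type*} [Finite m] [Finite n] [CommRing R] [IsDomain R]
    {k : ℕ} (hk : k ≠ 0) {S : Set R} (hS : S.Finite) :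
    {M : Matrix m n R | ∀ i j, M i j ^ k ∈ S}.Finite :=
  Set.Finite.pi' fun _ => Set.Finite.pi' fun _ => finite_setOf_pow_mem hk hS

lemma mem_Cct_iff {v : Fin 3 → ℂ} (hv : v ≠ 0) :
    Projectivization.mk ℂ v hv ∈ Cct ↔ conicLineForm v = 0 := by
  obtain ⟨a, ha⟩ := Projectivization.exists_smul_eq_mk_rep ℂ v hv
  have hcubic : ∀ w : Fin 3 → ℂ, w 0 * w 1 * w 2 + w 1 ^ 3 = conicLineForm w := fun w => by
    simp only [conicLineForm, conicForm]; ring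
  have hscale : conicLineForm (a • v) = (a : ℂ) ^ 3 * conicLineForm v := by
    simp only [conicLineForm, conicForm, Units.smul_def, Pi.smul_apply, smul_eq_mul]
    ring
  rw [Cct, Set.mem_ofPred_eq, ← ha, hcubic, hscale, mul_eq_zero,
    or_iff_right (pow_ne_zero 3 a.ne_zero)]

lemma mulVec_ne_zero (g : SL3) {v : Fin 3 → ℂ} (hv : v ≠ 0) :
    (g : Matrix (Fin 3) (Fin 3) ℂ) *ᵥ v ≠ 0 := fun h => hv <| by
  simpa [mulVec_mulVec, adjugate_mul] using
    congrArg (((g⁻¹ : SL3) : Matrix (Fin 3) (Fin 3) ℂ) *ᵥ ·) h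

lemma act_mk (g : SL3) {v : Fin 3 → ℂ} (hv : v ≠ 0) :
    act g (Projectivization.mk ℂ v hv) = Projectivization.mk ℂ (g *ᵥ v) (mulVec_ne_zero g hv) := by
  simp [act, Projectivization.map_mk, SpecialLinearGroup.toLin'_apply, toLin'_apply]

lemma conicLineForm_mulVec_eq_zero {g : SL3} (hg : act g '' Cct ⊆ Cct) (v : Fin 3 → ℂ)
    (hv : conicLineForm v = 0) : conicLineForm ((g : Matrix (Fin 3) (Fin 3) ℂ) *ᵥ v) = 0 := by
  rcases eq_or_ne v 0 with rfl | hv₀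
  · simp [conicLineForm]
  · rw [← mem_Cct_iff (mulVec_ne_zero g hv₀), ← act_mk g hv₀]
    exact hg (Set.mem_image_of_mem _ ((mem_Cct_iff hv₀).mpr hv))

lemma exists_mulVec_rep_eq_smul_of_act_eq {g : SL3} {p : P2} (h : act g p = p) :
    ∃ s : ℂ, (g : Matrix (Fin 3) (Fin 3) ℂ) *ᵥ p.rep = s • p.rep := by
  rw [← p.mk_rep, act_mk, Projectivization.mk_eq_mk_iff'] at h
  exact h.imp fun _ hs => hs.symm

lemma eq_node₁_of_rep {p : P2} (h₁ : p.rep 1 = 0) (h₂ : p.rep 2 = 0) : p = node₁ := by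
  rw [← p.mk_rep, node₁, Projectivization.mk_eq_mk_iff']
  exact ⟨p.rep 0, by ext k; fin_cases k <;> simp [h₁, h₂]⟩

lemma eq_node₂_of_rep {p : P2} (h₀ : p.rep 0 = 0) (h₁ : p.rep 1 = 0) : p = node₂ := by
  rw [← p.mk_rep, node₂, Projectivization.mk_eq_mk_iff']
  exact ⟨p.rep 2, by ext k; fin_cases k <;> simp [h₀, h₁]⟩

lemma rep_ne_zero_of_mem_Cct {p : P2} (hp : p ∈ Cct) (h₁ : p ≠ node₁) (h₂ : p ≠ node₂) :
    p.rep 0 ≠ 0 ∧ p.rep 2 ≠ 0 := by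
  have hC : p.rep 0 * p.rep 1 * p.rep 2 + p.rep 1 ^ 3 = 0 := hp
  constructor
  · intro h₀
    refine h₂ (eq_node₂_of_rep h₀ (pow_eq_zero_iff three_ne_zero |>.mp ?_))
    linear_combination hC - p.rep 1 * p.rep 2 * h₀
  · intro h₂'
    refine h₁ (eq_node₁_of_rep (pow_eq_zero_iff three_ne_zero |>.mp ?_) h₂')
    linear_combination hC - p.rep 0 * p.rep 1 * h₂'

/-- If marked points on the conic-plus-transverse-line cubic have infinite `SL(3,ℂ)`
stabilizer, every marked point is one of the two nodes `(1:0:0)` or `(0:0:1)`. -/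
theorem conic_transverse_line_stabilizer (n : ℕ) (p : Fin n → P2)
    (hp : ∀ i, p i ∈ Cct)
    (hstab : {g : SL3 | act g '' Cct = Cct ∧ ∀ i, act g (p i) = p i}.Infinite) :
    ∀ i, p i = node₁ ∨ p i = node₂ := by
  intro i
  by_contra! hi
  obtain ⟨hv₀, hv₂⟩ := rep_ne_zero_of_mem_Cct (hp i) hi.1 hi.2
  set v := (p i).rep
  refine hstab (((finite_setOf_matrix_pow_mem (k := 6) (by norm_num)
    (S := {0, 1, (v 0 / v 2) ^ 6, (v 2 / v 0) ^ 6}) (by simp)).preimage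
    Subtype.val_injective.injOn).subset ?_)
  rintro g ⟨hgC, hgp⟩
  obtain ⟨s, hs⟩ := exists_mulVec_rep_eq_smul_of_act_eq (hgp i)
  exact entry_pow_six_mem g.prop (conicLineForm_mulVec_eq_zero hgC.subset) hv₀ hv₂ hs
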